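/- Under the hypotheses of the decomposition lemma with κ ∈ (0, 1/3], the inequality ‖f₊‖₂ ≥ ϑ ‖f‖₂ holds, where ϑ = (1/√2)√(1-κ) − √κ and f₊ = max(f,0). Consequently ‖f₋‖₂ ≤ √(1-ϑ²) ‖f‖₂. -/

import Mathlib

open Finset

/-- The signed indicator `1_{f>0} - 1_{f<0}`. -/
noncomputable def sgnInd {V : Type*} (f : V → ℝ) : V → ℝ :=
  fun v => if 0 < f v then 1 else if f v < 0 then -1 else 0

/-- The structured component `f_str = (1/n)⟨|f|, 1_V⟩(1_{f>0} - 1_{f<0})`. -/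
noncomputable def fStr {V : Type*} [Fintype V] (f : V → ℝ) : V → ℝ :=
  fun v => ((∑ w, f w * sgnInd f w) / (Fintype.card V : ℝ)) * sgnInd f v

/-!
Let `c` be the mean of `|f|`. The function `|f| - c` is orthogonal to the constants, so the
Rayleigh bound for `dμ₂`, together with `⟨|f|, A|f|⟩ ≥ -⟨f, Af⟩ = -dμ‖f‖²`, gives
`n c² ≥ (1 - κ)‖f‖²` (this is `‖f_str‖²`), i.e. `‖|f| - c‖² ≤ κ‖f‖²`. On the positive support
`P`, which has at least `n / 2` vertices, the triangle inequality in `ℓ²(P)` then gives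
`‖f₊‖ ≥ c √|P| - ‖|f| - c‖ ≥ √((1 - κ) / 2) ‖f‖ - √κ ‖f‖`. Since `ϑ ≥ 0` for `κ ≤ 1/3`, squaring
and `‖f₊‖² + ‖f₋‖² = ‖f‖²` give the bound on `f₋`.
-/

open Real

noncomputable def quadForm {V : Type*} [Fintype V] (a : V → V → ℝ) (g : V → ℝ) : ℝ :=
  ∑ u, ∑ v, a u v * g u * g v

section QuadForm

variable {V : Type*} [Fintype V] {a : V → V → ℝ} {d : ℝ}

theorem sum_sum_mul_left (hrow : ∀ u, ∑ v, a u v = d) (h : V → ℝ) :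
    ∑ u, ∑ v, a u v * h u = d * ∑ u, h u := by
  simp only [← sum_mul, hrow, mul_sum]

theorem sum_sum_mul_right (hsym : ∀ u v, a u v = a v u) (hrow : ∀ u, ∑ v, a u v = d)
    (h : V → ℝ) : ∑ u, ∑ v, a u v * h v = d * ∑ v, h v := by
  rw [sum_comm]
  exact sum_sum_mul_left (fun v => (sum_congr rfl fun u _ => hsym u v).trans (hrow v)) h

theorem neg_mul_sum_sq_le_quadForm (hsym : ∀ u v, a u v = a v u) (hnn : ∀ u v, 0 ≤ a u v)
    (hrow : ∀ u, ∑ v, a u v = d) (g : V → ℝ) : -(d * ∑ v, g v ^ 2) ≤ quadForm a g := by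
  have hpos : 0 ≤ ∑ u, ∑ v, a u v * (g u + g v) ^ 2 :=
    sum_nonneg fun u _ => sum_nonneg fun v _ => mul_nonneg (hnn u v) (sq_nonneg _)
  have hexpand : ∀ u v, a u v * (g u + g v) ^ 2
      = a u v * g u ^ 2 + 2 * (a u v * g u * g v) + a u v * g v ^ 2 := fun u v => by ring
  simp only [hexpand, sum_add_distrib, ← mul_sum, sum_sum_mul_left hrow,
    sum_sum_mul_right hsym hrow] at hpos
  unfold quadForm
  linarith

theorem abs_quadForm_le (hnn : ∀ u v, 0 ≤ a u v) (g : V → ℝ) :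
    |quadForm a g| ≤ quadForm a fun v => |g v| :=
  (abs_sum_le_sum_abs _ _).trans <| sum_le_sum fun u _ =>
    (abs_sum_le_sum_abs _ _).trans_eq <| sum_congr rfl fun v _ => by
      rw [abs_mul, abs_mul, abs_of_nonneg (hnn u v)]

theorem quadForm_eq_of_eigen {μ : ℝ} {f : V → ℝ}
    (heig : ∀ u, ∑ v, a u v * f v = d * μ * f u) :
    quadForm a f = d * μ * ∑ v, f v ^ 2 := by
  rw [quadForm, mul_sum]
  refine sum_congr rfl fun u _ => ?_
  calc ∑ v, a u v * f u * f v = f u * ∑ v, a u v * f v := by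
        rw [mul_sum]; exact sum_congr rfl fun v _ => by ring
    _ = d * μ * f u ^ 2 := by rw [heig]; ring

theorem quadForm_sub_const (hsym : ∀ u v, a u v = a v u) (hrow : ∀ u, ∑ v, a u v = d)
    (g : V → ℝ) (c : ℝ) :
    quadForm a (fun v => g v - c)
      = quadForm a g - 2 * c * d * ∑ v, g v + c ^ 2 * d * Fintype.card V := by
  have hexpand : ∀ u v, a u v * (g u - c) * (g v - c) = a u v * g u * g v
      - a u v * (c * g u) - a u v * (c * g v) + a u v * c ^ 2 := fun u v => by ring
  simp only [quadForm, hexpand, sum_add_distrib, sum_sub_distrib, sum_sum_mul_left hrow,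
    sum_sum_mul_right hsym hrow, ← mul_sum, sum_const, card_univ, nsmul_eq_mul]
  ring

end QuadForm

section Mean

variable {V : Type*} [Fintype V] {g : V → ℝ} {c : ℝ}

theorem sum_sub_eq_zero_of_sum_eq (hc : ∑ v, g v = Fintype.card V * c) :
    ∑ v, (g v - c) = 0 := by
  rw [sum_sub_distrib, hc, sum_const, card_univ, nsmul_eq_mul, sub_self]

theorem sum_sub_sq_of_sum_eq (hc : ∑ v, g v = Fintype.card V * c) :
    ∑ v, (g v - c) ^ 2 = ∑ v, g v ^ 2 - Fintype.card V * c ^ 2 := by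
  have hexpand : ∀ v, (g v - c) ^ 2 = g v ^ 2 - 2 * c * g v + c ^ 2 := fun v => by ring
  simp only [hexpand, sum_add_distrib, sum_sub_distrib, ← mul_sum, hc, sum_const, card_univ,
    nsmul_eq_mul]
  ring

end Mean

section Eigenfunction

variable {V : Type*} [Fintype V] {a : V → V → ℝ} {d μ μ₂ : ℝ} {f : V → ℝ}

theorem neg_one_le_of_eigen (hsym : ∀ u v, a u v = a v u) (hnn : ∀ u v, 0 ≤ a u v)
    (hrow : ∀ u, ∑ v, a u v = d) (hd : 0 < d) (heig : ∀ u, ∑ v, a u v * f v = d * μ * f u)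
    (hf : 0 < ∑ v, f v ^ 2) : -1 ≤ μ := by
  have h := neg_mul_sum_sq_le_quadForm hsym hnn hrow f
  rw [quadForm_eq_of_eigen heig] at h
  exact le_of_mul_le_mul_right (by linarith) (mul_pos hd hf)

theorem mul_sum_sq_le_card_mul_sq_mean_abs (hsym : ∀ u v, a u v = a v u)
    (hnn : ∀ u v, 0 ≤ a u v) (hrow : ∀ u, ∑ v, a u v = d) (hd : 0 < d)
    (hray : ∀ g : V → ℝ, ∑ v, g v = 0 → quadForm a g ≤ d * μ₂ * ∑ v, g v ^ 2)
    (heig : ∀ u, ∑ v, a u v * f v = d * μ * f u) {c : ℝ}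
    (hc : ∑ v, |f v| = Fintype.card V * c) :
    (-μ - μ₂) * ∑ v, f v ^ 2 ≤ (1 - μ₂) * (Fintype.card V * c ^ 2) := by
  have hg := hray _ (sum_sub_eq_zero_of_sum_eq hc)
  simp only [quadForm_sub_const hsym hrow, sum_sub_sq_of_sum_eq hc, hc, sq_abs] at hg
  have habs : -(d * μ * ∑ v, f v ^ 2) ≤ quadForm a fun v => |f v| :=
    quadForm_eq_of_eigen heig ▸ (neg_le_abs _).trans (abs_quadForm_le hnn f)
  refine le_of_mul_le_mul_left ?_ hd
  linarith

end Eigenfunction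

theorem sqrt_sum_add_sq_le {ι : Type*} (s : Finset ι) (x y : ι → ℝ) :
    √(∑ i ∈ s, (x i + y i) ^ 2) ≤ √(∑ i ∈ s, x i ^ 2) + √(∑ i ∈ s, y i ^ 2) := by
  have hcs := sum_mul_le_sqrt_mul_sqrt s x y
  have hexpand : ∑ i ∈ s, (x i + y i) ^ 2
      = ∑ i ∈ s, x i ^ 2 + 2 * ∑ i ∈ s, x i * y i + ∑ i ∈ s, y i ^ 2 := by
    simp only [add_sq, sum_add_distrib, mul_sum, mul_assoc]
  rw [sqrt_le_left (by positivity), hexpand, add_sq,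
    sq_sqrt (sum_nonneg fun i _ => sq_nonneg (x i)), sq_sqrt (sum_nonneg fun i _ => sq_nonneg (y i))]
  linarith

theorem mul_sqrt_card_pos_le {V : Type*} [Fintype V] (f : V → ℝ) {c : ℝ} (hc : 0 ≤ c) :
    c * √(#{v | 0 < f v} : ℕ) ≤ √(∑ v, max (f v) 0 ^ 2) + √(∑ v, (|f v| - c) ^ 2) := by
  set P : Finset V := {v | 0 < f v}
  have hconst : c * √(#P : ℕ) = √(∑ v ∈ P, (f v + (c - f v)) ^ 2) := by
    simp only [add_sub_cancel, sum_const, nsmul_eq_mul]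
    rw [sqrt_mul (Nat.cast_nonneg _), sqrt_sq hc, mul_comm]
  have hpos : ∑ v ∈ P, f v ^ 2 = ∑ v, max (f v) 0 ^ 2 := by
    rw [sum_filter]
    refine sum_congr rfl fun v _ => ?_
    split_ifs with h
    · rw [max_eq_left h.le]
    · rw [max_eq_right (not_lt.mp h), sq, zero_mul]
  have hdev : ∑ v ∈ P, (c - f v) ^ 2 ≤ ∑ v, (|f v| - c) ^ 2 := by
    calc ∑ v ∈ P, (c - f v) ^ 2 = ∑ v ∈ P, (|f v| - c) ^ 2 :=
          sum_congr rfl fun v hv => by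
            rw [abs_of_pos (mem_filter.mp hv).2, ← neg_sub, neg_sq]
      _ ≤ ∑ v, (|f v| - c) ^ 2 :=
          sum_le_sum_of_subset_of_nonneg (subset_univ P) fun v _ _ => sq_nonneg _
  calc c * √(#P : ℕ) ≤ √(∑ v ∈ P, f v ^ 2) + √(∑ v ∈ P, (c - f v) ^ 2) :=
        hconst ▸ sqrt_sum_add_sq_le P f (fun v => c - f v)
    _ ≤ √(∑ v, max (f v) 0 ^ 2) + √(∑ v, (|f v| - c) ^ 2) := by
        rw [hpos]; gcongr

theorem card_le_two_mul_card_pos {V : Type*} [Fintype V] {f : V → ℝ} (hnz : ∀ v, f v ≠ 0)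
    (hsupp : #{v | f v < 0} ≤ #{v | 0 < f v}) : Fintype.card V ≤ 2 * #{v | 0 < f v} := by
  have hneg : univ.filter (fun v => f v < 0) = univ.filter fun v => ¬ 0 < f v :=
    filter_congr fun v _ => ⟨not_lt.mpr ∘ le_of_lt, (hnz v).lt_or_gt.resolve_right⟩
  have hsplit := card_filter_add_card_filter_not (s := univ) fun v => 0 < f v
  rw [← hneg, card_univ] at hsplit
  omega

theorem mul_sqrt_le_sqrt_sum_max_sq {V : Type*} [Fintype V] {f : V → ℝ} {c κ : ℝ}
    (hc : ∑ v, |f v| = Fintype.card V * c) (hc₀ : 0 ≤ c) (hκ : 0 ≤ κ)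
    (hstr : (1 - κ) * ∑ v, f v ^ 2 ≤ Fintype.card V * c ^ 2)
    (hP : (Fintype.card V : ℝ) ≤ 2 * (#{v | 0 < f v} : ℕ)) :
    (1 / √2 * √(1 - κ) - √κ) * √(∑ v, f v ^ 2) ≤ √(∑ v, max (f v) 0 ^ 2) := by
  have hS : 0 ≤ ∑ v, f v ^ 2 := sum_nonneg fun v _ => sq_nonneg _
  have hdev : ∑ v, (|f v| - c) ^ 2 ≤ κ * ∑ v, f v ^ 2 := by
    simp only [sum_sub_sq_of_sum_eq hc, sq_abs]
    linarith
  have hmass : √(1 - κ) * √(∑ v, f v ^ 2) / √2 ≤ c * √(#{v | 0 < f v} : ℕ) := by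
    rw [← sqrt_mul' _ hS, ← sqrt_div' _ zero_le_two, ← sqrt_sq hc₀, ← sqrt_mul (sq_nonneg c)]
    exact sqrt_le_sqrt (by nlinarith)
  have hdev' : √(∑ v, (|f v| - c) ^ 2) ≤ √κ * √(∑ v, f v ^ 2) :=
    sqrt_mul hκ _ ▸ sqrt_le_sqrt hdev
  have htriangle := mul_sqrt_card_pos_le f hc₀
  linarith [show (1 / √2 * √(1 - κ) - √κ) * √(∑ v, f v ^ 2)
    = √(1 - κ) * √(∑ v, f v ^ 2) / √2 - √κ * √(∑ v, f v ^ 2) by ring]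

theorem max_zero_sq_add_max_neg_zero_sq (x : ℝ) : max x 0 ^ 2 + max (-x) 0 ^ 2 = x ^ 2 := by
  rcases le_total x 0 with h | h <;> simp [h]

theorem sqrt_le_sqrt_one_sub_sq_mul {x y s t : ℝ} (hx : 0 ≤ x) (hy : 0 ≤ y) (hs : x + y = s)
    (ht : 0 ≤ t) (h : t * √s ≤ √x) : √y ≤ √(1 - t ^ 2) * √s := by
  have hs0 : 0 ≤ s := hs ▸ add_nonneg hx hy
  have hsq := pow_le_pow_left₀ (by positivity) h 2
  rw [mul_pow, sq_sqrt hs0, sq_sqrt hx] at hsq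
  rw [← sqrt_mul' _ hs0]
  exact sqrt_le_sqrt (by nlinarith)

theorem fplus_norm_lower_general {V : Type*} [Fintype V]
    (a : V → V → ℝ) (hsym : ∀ u v, a u v = a v u) (hnn : ∀ u v, 0 ≤ a u v)
    (d μ μ₂ : ℝ) (hd : 0 < d) (hrow : ∀ u, ∑ v, a u v = d)
    (hray : ∀ g : V → ℝ, (∑ v, g v) = 0 →
      (∑ u, ∑ v, a u v * g u * g v) ≤ d * μ₂ * ∑ v, g v ^ 2)
    (f : V → ℝ) (heig : ∀ u, ∑ v, a u v * f v = d * μ * f u)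
    (hnz : ∀ v, f v ≠ 0)
    (hκ : 0 < (1 + μ) / (1 - μ₂) ∧ (1 + μ) / (1 - μ₂) ≤ 1 / 3)
    (hsupp : (Finset.univ.filter fun v => f v < 0).card ≤
      (Finset.univ.filter fun v => 0 < f v).card) :
    Real.sqrt (∑ v, max (f v) 0 ^ 2) ≥
        ((1 / Real.sqrt 2) * Real.sqrt (1 - (1 + μ) / (1 - μ₂)) -
            Real.sqrt ((1 + μ) / (1 - μ₂))) *
          Real.sqrt (∑ v, f v ^ 2) ∧
      Real.sqrt (∑ v, max (-f v) 0 ^ 2) ≤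
        Real.sqrt (1 - ((1 / Real.sqrt 2) * Real.sqrt (1 - (1 + μ) / (1 - μ₂)) -
            Real.sqrt ((1 + μ) / (1 - μ₂))) ^ 2) *
          Real.sqrt (∑ v, f v ^ 2) := by
  rcases isEmpty_or_nonempty V with _ | _
  · simp
  obtain ⟨hκ₀, hκ₁⟩ := hκ
  set κ := (1 + μ) / (1 - μ₂)
  set S := ∑ v, f v ^ 2
  set c := (∑ v, |f v|) / Fintype.card V
  have hS : 0 < S := sum_pos (fun v _ => pow_two_pos_of_ne_zero (hnz v)) univ_nonempty
  have hn : (0 : ℝ) < Fintype.card V := Nat.cast_pos.mpr Fintype.card_pos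
  have hc : ∑ v, |f v| = Fintype.card V * c := (mul_div_cancel₀ _ hn.ne').symm
  have hc₀ : 0 ≤ c := div_nonneg (sum_nonneg fun v _ => abs_nonneg _) hn.le
  have hμ₂ : 0 < 1 - μ₂ := by
    by_contra! h
    have := neg_one_le_of_eigen hsym hnn hrow hd heig hS
    exact hκ₀.not_ge (div_nonpos_of_nonneg_of_nonpos (by linarith) h)
  have hstr : (1 - κ) * S ≤ Fintype.card V * c ^ 2 := by
    have hκμ : κ * (1 - μ₂) = 1 + μ := div_mul_cancel₀ _ hμ₂.ne'
    refine le_of_mul_le_mul_left ?_ hμ₂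
    linear_combination (-S) * hκμ +
      mul_sum_sq_le_card_mul_sq_mean_abs hsym hnn hrow hd hray heig hc
  have hfplus := mul_sqrt_le_sqrt_sum_max_sq hc hc₀ hκ₀.le hstr
    (mod_cast card_le_two_mul_card_pos hnz hsupp)
  refine ⟨hfplus, sqrt_le_sqrt_one_sub_sq_mul (by positivity) (by positivity) ?_ ?_ hfplus⟩
  · simp only [← sum_add_distrib, max_zero_sq_add_max_neg_zero_sq, S]
  · rw [sub_nonneg, one_div_mul_eq_div, ← sqrt_div' _ zero_le_two]
    exact sqrt_le_sqrt (by linarith)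

/-- Under the hypotheses of the decomposition lemma with `κ ∈ (0, 1/3]` and
`|supp(f₊)| ≥ |supp(f₋)|`, one has `‖f₊‖₂ ≥ ϑ‖f‖₂` where
`ϑ = (1/√2)√(1-κ) − √κ`, and consequently `‖f₋‖₂ ≤ √(1-ϑ²)‖f‖₂`. -/
theorem fplus_norm_lower {V : Type*} [Fintype V]
    (hV : 2 ≤ Fintype.card V)
    (a : V → V → ℝ) (hsym : ∀ u v, a u v = a v u) (hnn : ∀ u v, 0 ≤ a u v)
    (d μ μ₂ : ℝ) (hd : 0 < d) (hrow : ∀ u, ∑ v, a u v = d)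
    (hray : ∀ g : V → ℝ, (∑ v, g v) = 0 →
      (∑ u, ∑ v, a u v * g u * g v) ≤ d * μ₂ * ∑ v, g v ^ 2)
    (hμ₂ : μ₂ ≠ 1)
    (f : V → ℝ) (heig : ∀ u, ∑ v, a u v * f v = d * μ * f u)
    (horth : (∑ v, f v) = 0) (hnz : ∀ v, f v ≠ 0)
    (hκ : 0 < (1 + μ) / (1 - μ₂) ∧ (1 + μ) / (1 - μ₂) ≤ 1 / 3)
    (hsupp : (Finset.univ.filter fun v => f v < 0).card ≤
      (Finset.univ.filter fun v => 0 < f v).card) :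
    Real.sqrt (∑ v, max (f v) 0 ^ 2) ≥
        ((1 / Real.sqrt 2) * Real.sqrt (1 - (1 + μ) / (1 - μ₂)) -
            Real.sqrt ((1 + μ) / (1 - μ₂))) *
          Real.sqrt (∑ v, f v ^ 2) ∧
      Real.sqrt (∑ v, max (-f v) 0 ^ 2) ≤
        Real.sqrt (1 - ((1 / Real.sqrt 2) * Real.sqrt (1 - (1 + μ) / (1 - μ₂)) -
            Real.sqrt ((1 + μ) / (1 - μ₂))) ^ 2) *
          Real.sqrt (∑ v, f v ^ 2) :=
  fplus_norm_lower_general a hsym hnn d μ μ₂ hd hrow hray f heig hnz hκ hsupp
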